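/- Let A ⊆ ℝ^n be a measurable periodic set avoiding distance 1, let φ(y) = δ̄(A ∩ (A − y)) be its autocorrelation function, and let v_1, …, v_{n+1} be the vertices of a regular simplex in ℝ^n of edge length 1. Then φ(v_1) + ⋯ + φ(v_{n+1}) ≤ φ(0) = δ̄(A). -/

import Mathlib

open MeasureTheory Filter Real

noncomputable def besselJ (α : ℝ) (t : ℝ) : ℝ :=
  ∑' k : ℕ, ((-1 : ℝ) ^ k / (k.factorial * Real.Gamma (k + α + 1))) * (t / 2) ^ (2 * (k : ℝ) + α)

noncomputable def Omega (n : ℕ) (t : ℝ) : ℝ :=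
  if t = 0 then 1
  else Real.Gamma (n / 2 : ℝ) * (2 / t) ^ (((n : ℝ) - 2) / 2) * besselJ (((n : ℝ) - 2) / 2) t

noncomputable def upperDensity {n : ℕ} (A : Set (EuclideanSpace ℝ (Fin n))) : ℝ :=
  Filter.limsup
    (fun T : ℝ => (volume (A ∩ {x | ∀ i, |x i| ≤ T})).toReal / (2 * T) ^ n)
    Filter.atTop

def AvoidsDistance {n : ℕ} (A : Set (EuclideanSpace ℝ (Fin n))) (d : ℝ) : Prop :=
  ∀ x ∈ A, ∀ y ∈ A, dist x y ≠ d

/-!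
For `i ≠ j` the sets `A ∩ (A - vᵢ)` and `A ∩ (A - vⱼ)` are disjoint, since a common point `x`
would give the points `x + vᵢ` and `x + vⱼ` of `A` at distance `1`. So, inside every cube, the
volumes of these `n + 1` subsets of `A` add up to at most the volume of `A`.

Upper densities are limsups, which are not additive; but a set `S` invariant under a lattice
with bounded fundamental domain `F` has a true density. Comparing the lattice translates of `F`
that meet `[-T, T]ⁿ` with those contained in it squeezes `vol (S ∩ [-T, T]ⁿ) * vol F` between
`vol (S ∩ F) * (2 (T ∓ 2R))ⁿ`, where `F ⊆ [-R, R]ⁿ`.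
-/
open Set Function Topology Pointwise

def cube (n : ℕ) (T : ℝ) : Set (EuclideanSpace ℝ (Fin n)) := {x | ∀ i, |x i| ≤ T}

section Cube

variable {n : ℕ}

theorem cube_eq_preimage_pi (n : ℕ) (T : ℝ) :
    cube n T = (MeasurableEquiv.toLp 2 (Fin n → ℝ)).symm ⁻¹' univ.pi fun _ => Icc (-T) T := by
  ext x
  simp only [cube, MeasurableEquiv.coe_toLp_symm, mem_preimage, Set.mem_pi, mem_univ,
    forall_true_left, mem_Icc, mem_ofPred_eq, abs_le]

theorem measurableSet_cube (n : ℕ) (T : ℝ) : MeasurableSet (cube n T) := by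
  rw [cube_eq_preimage_pi]
  exact (MeasurableEquiv.toLp 2 (Fin n → ℝ)).symm.measurable
    (MeasurableSet.univ_pi fun _ => measurableSet_Icc)

theorem volume_cube {T : ℝ} (hT : 0 ≤ T) : volume (cube n T) = ENNReal.ofReal ((2 * T) ^ n) := by
  rw [cube_eq_preimage_pi, (EuclideanSpace.volume_preserving_symm_measurableEquiv_toLp
    (Fin n)).measure_preimage (MeasurableSet.univ_pi fun _ => measurableSet_Icc).nullMeasurableSet,
    volume_pi_pi]
  simp only [Real.volume_Icc, Finset.prod_const, Finset.card_univ, Fintype.card_fin]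
  rw [sub_neg_eq_add, ← two_mul, ENNReal.ofReal_pow (by positivity)]

theorem volume_inter_cube_ne_top (S : Set (EuclideanSpace ℝ (Fin n))) {T : ℝ} (hT : 0 ≤ T) :
    volume (S ∩ cube n T) ≠ ⊤ :=
  measure_ne_top_of_subset inter_subset_right (by rw [volume_cube hT]; exact ENNReal.ofReal_ne_top)

theorem Bornology.IsBounded.exists_subset_cube {F : Set (EuclideanSpace ℝ (Fin n))}
    (hF : Bornology.IsBounded F) : ∃ R, 0 ≤ R ∧ F ⊆ cube n R := by
  obtain ⟨R, hR, hFR⟩ := hF.subset_closedBall_lt 0 0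
  refine ⟨R, hR.le, fun x hx i => ?_⟩
  have hx : ‖x‖ ≤ R := by simpa using hFR hx
  exact (Real.norm_eq_abs (x i) ▸ PiLp.norm_apply_le x i).trans hx

theorem mem_vadd_cube_iff {g x : EuclideanSpace ℝ (Fin n)} {T : ℝ} :
    x ∈ g +ᵥ cube n T ↔ ∀ i, |x i - g i| ≤ T := by
  simp [mem_vadd_set_iff_neg_vadd_mem, cube, neg_add_eq_sub]

theorem subset_vadd_cube_of_inter_nonempty {F : Set (EuclideanSpace ℝ (Fin n))} {R T T' : ℝ}
    (hF : F ⊆ cube n R) (hTT' : T + 2 * R ≤ T') {g : EuclideanSpace ℝ (Fin n)}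
    (h : (F ∩ (g +ᵥ cube n T)).Nonempty) : F ⊆ g +ᵥ cube n T' := by
  obtain ⟨a, haF, hag⟩ := h
  intro y hy
  rw [mem_vadd_cube_iff] at hag ⊢
  intro i
  have hy := hF hy i
  have ha := hF haF i
  calc |y i - g i| ≤ |y i - a i| + |a i - g i| := abs_sub_le _ _ _
    _ ≤ (|y i| + |a i|) + T := add_le_add (abs_sub _ _) (hag i)
    _ ≤ T' := by linarith

end Cube

section Periodic

variable {E : Type*} [AddCommGroup E]

theorem vadd_set_eq_self_iff {v : E} {S : Set E} : v +ᵥ S = S ↔ ∀ x, x ∈ S ↔ x + v ∈ S := by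
  rw [← AddAction.mem_stabilizer_iff, AddAction.mem_stabilizer_set]
  simp only [vadd_eq_add, add_comm v, iff_comm]

theorem vadd_set_eq_self_of_mem_span {s S : Set E} (hs : ∀ v ∈ s, v +ᵥ S = S) {g : E}
    (hg : g ∈ Submodule.span ℤ s) : g +ᵥ S = S :=
  (Submodule.span_le (p := (AddAction.stabilizer E S).toIntSubmodule)).2 hs hg

theorem vadd_inter_preimage_add_eq_self {A : Set E} {v : E} (hA : v +ᵥ A = A) (y : E) :
    v +ᵥ (A ∩ {x | x + y ∈ A}) = A ∩ {x | x + y ∈ A} := by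
  rw [vadd_set_eq_self_iff] at hA ⊢
  intro x
  simp only [mem_inter_iff, mem_ofPred_eq, hA x, hA (x + y), add_right_comm]

end Periodic

namespace MeasureTheory.IsAddFundamentalDomain

variable {G α : Type*} [AddGroup G] [Countable G] [AddAction G α] [MeasurableSpace α]
  [MeasurableConstVAdd G α] {μ : Measure α} [VAddInvariantMeasure G α μ] {F S X Y : Set α}

theorem measure_inter_eq_tsum_of_invariant (hF : IsAddFundamentalDomain G F μ)
    (hS : ∀ g : G, g +ᵥ S = S) (X : Set α) :
    μ (S ∩ X) = ∑' g : G, μ (S ∩ (g +ᵥ X) ∩ F) := by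
  simp_rw [hF.measure_eq_tsum (S ∩ X), vadd_set_inter, hS]

theorem measure_inter_mul_le_of_vadd_subset (hF : IsAddFundamentalDomain G F μ)
    (hS : ∀ g : G, g +ᵥ S = S) (hXY : ∀ g : G, (F ∩ (g +ᵥ X)).Nonempty → F ⊆ g +ᵥ Y) :
    μ (S ∩ X) * μ F ≤ μ (S ∩ F) * μ Y := by
  rw [hF.measure_inter_eq_tsum_of_invariant hS, hF.measure_eq_tsum Y, ← ENNReal.tsum_mul_right,
    ← ENNReal.tsum_mul_left]
  refine ENNReal.tsum_le_tsum fun g => ?_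
  by_cases h : (F ∩ (g +ᵥ X)).Nonempty
  · rw [inter_eq_right.mpr (hXY g h)]
    gcongr
    exact inter_subset_left
  · have : S ∩ (g +ᵥ X) ∩ F = ∅ := by
      rw [not_nonempty_iff_eq_empty] at h
      rw [inter_right_comm, inter_assoc, h, inter_empty]
    simp [this]

theorem mul_measure_le_of_vadd_subset (hF : IsAddFundamentalDomain G F μ)
    (hS : ∀ g : G, g +ᵥ S = S) (hXY : ∀ g : G, (F ∩ (g +ᵥ X)).Nonempty → F ⊆ g +ᵥ Y) :
    μ (S ∩ F) * μ X ≤ μ (S ∩ Y) * μ F := by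
  rw [hF.measure_inter_eq_tsum_of_invariant hS Y, hF.measure_eq_tsum X, ← ENNReal.tsum_mul_right,
    ← ENNReal.tsum_mul_left]
  refine ENNReal.tsum_le_tsum fun g => ?_
  by_cases h : (F ∩ (g +ᵥ X)).Nonempty
  · have hSF : S ∩ (g +ᵥ Y) ∩ F = S ∩ F := by
      rw [inter_assoc, inter_eq_right.mpr (hXY g h)]
    rw [hSF]
    gcongr
    exact inter_subset_right
  · have : (g +ᵥ X) ∩ F = ∅ := by
      rwa [inter_comm, ← not_nonempty_iff_eq_empty]
    simp [this]

end MeasureTheory.IsAddFundamentalDomain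

theorem tendsto_div_pow_of_squeeze {f : ℝ → ℝ} {s m c a : ℝ} (n : ℕ) (hm : 0 < m) (hc : 0 < c)
    (hlo : ∀ᶠ T in atTop, s * (c * (T - a)) ^ n ≤ f T * m)
    (hup : ∀ᶠ T in atTop, f T * m ≤ s * (c * (T + a)) ^ n) :
    Tendsto (fun T => f T / (c * T) ^ n) atTop (𝓝 (s / m)) := by
  have hbound : ∀ b : ℝ, Tendsto (fun T => s * (c * (T + b)) ^ n / (m * (c * T) ^ n)) atTop
      (𝓝 (s / m)) := by
    intro b
    have hratio : Tendsto (fun T : ℝ => 1 + b * T⁻¹) atTop (𝓝 1) := by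
      simpa using tendsto_const_nhds.add (tendsto_inv_atTop_zero.const_mul b)
    have hlim := (hratio.pow n).const_mul (s / m)
    rw [one_pow, mul_one] at hlim
    refine hlim.congr' ?_
    filter_upwards [eventually_gt_atTop 0] with T hT
    have hscale : (1 + b * T⁻¹) * (c * T) = c * (T + b) := by field_simp
    rw [← hscale, mul_pow]
    field_simp
  refine tendsto_of_tendsto_of_tendsto_of_le_of_le'
    (g := fun T => s * (c * (T - a)) ^ n / (m * (c * T) ^ n))
    (by simpa only [← sub_eq_add_neg] using hbound (-a)) (hbound a) ?_ ?_
  · filter_upwards [hlo, eventually_gt_atTop 0] with T hT hT0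
    rw [div_le_div_iff₀ (by positivity) (by positivity)]
    nlinarith [pow_pos (mul_pos hc hT0) n]
  · filter_upwards [hup, eventually_gt_atTop 0] with T hT hT0
    rw [div_le_div_iff₀ (by positivity) (by positivity)]
    nlinarith [pow_pos (mul_pos hc hT0) n]

theorem tendsto_volume_inter_cube_div_of_periodic {n : ℕ} {ι : Type*} [Finite ι]
    (B : Module.Basis ι ℝ (EuclideanSpace ℝ (Fin n))) {S : Set (EuclideanSpace ℝ (Fin n))}
    (hS : ∀ g ∈ Submodule.span ℤ (range B), g +ᵥ S = S) :
    Tendsto (fun T => (volume (S ∩ cube n T)).toReal / (2 * T) ^ n) atTop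
      (𝓝 ((volume (S ∩ ZSpan.fundamentalDomain B)).toReal /
        (volume (ZSpan.fundamentalDomain B)).toReal)) := by
  set F := ZSpan.fundamentalDomain B
  have hF := ZSpan.isAddFundamentalDomain' B volume
  have : Countable (Submodule.span ℤ (range B)).toAddSubgroup :=
    inferInstanceAs (Countable (Submodule.span ℤ (range B)))
  have hSL : ∀ g : (Submodule.span ℤ (range B)).toAddSubgroup, g +ᵥ S = S := fun g => hS g g.2
  obtain ⟨R, hR, hFR⟩ := (ZSpan.fundamentalDomain_isBounded B).exists_subset_cube
  have hFfin : volume F ≠ ⊤ := (ZSpan.fundamentalDomain_isBounded B).measure_lt_top.ne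
  have hSFfin : volume (S ∩ F) ≠ ⊤ := measure_ne_top_of_subset inter_subset_right hFfin
  have hcover {T T' : ℝ} (hTT' : T + 2 * R ≤ T') (g : (Submodule.span ℤ (range B)).toAddSubgroup)
      (h : (F ∩ (g +ᵥ cube n T)).Nonempty) : F ⊆ g +ᵥ cube n T' :=
    subset_vadd_cube_of_inter_nonempty hFR hTT' h
  refine tendsto_div_pow_of_squeeze n
    (ENNReal.toReal_pos (ZSpan.measure_fundamentalDomain_ne_zero B) hFfin) two_pos
    (a := 2 * R) ?_ ?_
  · filter_upwards [eventually_ge_atTop (2 * R)] with T hT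
    have h := hF.mul_measure_le_of_vadd_subset hSL
      (hcover (T := T - 2 * R) (T' := T) (by linarith))
    rw [volume_cube (by linarith)] at h
    have := ENNReal.toReal_mono
      (ENNReal.mul_ne_top (volume_inter_cube_ne_top S (by linarith)) hFfin) h
    rwa [ENNReal.toReal_mul, ENNReal.toReal_mul,
      ENNReal.toReal_ofReal (pow_nonneg (by linarith) n)] at this
  · filter_upwards [eventually_ge_atTop 0] with T hT
    have h := hF.measure_inter_mul_le_of_vadd_subset hSL
      (hcover (T := T) (T' := T + 2 * R) le_rfl)
    rw [volume_cube (by linarith)] at h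
    have := ENNReal.toReal_mono (ENNReal.mul_ne_top hSFfin ENNReal.ofReal_ne_top) h
    rwa [ENNReal.toReal_mul, ENNReal.toReal_mul, ENNReal.toReal_ofReal (by positivity)] at this

theorem tendsto_upperDensity_of_periodic {n : ℕ} {b : Fin n → EuclideanSpace ℝ (Fin n)}
    (hb : LinearIndependent ℝ b) {S : Set (EuclideanSpace ℝ (Fin n))} (hS : ∀ i, b i +ᵥ S = S) :
    Tendsto (fun T => (volume (S ∩ cube n T)).toReal / (2 * T) ^ n) atTop
      (𝓝 (upperDensity S)) := by
  let B := basisOfLinearIndependentOfCardEqFinrank' b hb (by simp)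
  have h := tendsto_volume_inter_cube_div_of_periodic B (S := S) fun g hg =>
    vadd_set_eq_self_of_mem_span (by simpa [B] using hS) hg
  have hlim : upperDensity S = _ := h.limsup_eq
  rwa [hlim]

theorem AvoidsDistance.pairwise_disjoint_preimage_add {n : ℕ} {A : Set (EuclideanSpace ℝ (Fin n))}
    {d : ℝ} (hA : AvoidsDistance A d) {ι : Type*} {v : ι → EuclideanSpace ℝ (Fin n)}
    (hv : Pairwise fun i j => dist (v i) (v j) = d) :
    Pairwise (Disjoint on fun i => {x | x + v i ∈ A}) := by
  intro i j hij
  refine disjoint_left.2 fun x hxi hxj => hA _ hxi _ hxj ?_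
  rw [dist_add_left]
  exact hv hij

theorem MeasureTheory.sum_measureReal_le_of_pairwise_disjoint {α ι : Type*} [MeasurableSpace α]
    {μ : Measure α} [Fintype ι] {s : ι → Set α} {t : Set α} (hs : ∀ i, MeasurableSet (s i))
    (hd : Pairwise (Disjoint on s)) (hst : ∀ i, s i ⊆ t) (ht : μ t ≠ ⊤) :
    ∑ i, μ.real (s i) ≤ μ.real t := by
  rw [← measureReal_biUnion_finset (hd.set_pairwise _) (fun i _ => hs i)
    (fun i _ => measure_ne_top_of_subset (hst i) ht)]
  exact measureReal_mono (iUnion₂_subset fun i _ => hst i) ht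

theorem simplex_inequality_general (n : ℕ)
    (A : Set (EuclideanSpace ℝ (Fin n))) (hA : MeasurableSet A)
    (b : Fin n → EuclideanSpace ℝ (Fin n)) (hb : LinearIndependent ℝ b)
    (hper : ∀ i, ∀ x : EuclideanSpace ℝ (Fin n), x ∈ A ↔ x + b i ∈ A)
    (havoid : AvoidsDistance A 1)
    (v : Fin (n + 1) → EuclideanSpace ℝ (Fin n))
    (hv : Pairwise fun i j => dist (v i) (v j) = 1)
    (φ : EuclideanSpace ℝ (Fin n) → ℝ)
    (hφ : ∀ y, φ y = upperDensity (A ∩ {x | x + y ∈ A})) :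
    (∑ i, φ (v i)) ≤ φ 0 ∧ φ 0 = upperDensity A := by
  have hφ0 : φ 0 = upperDensity A := by simp [hφ]
  refine ⟨?_, hφ0⟩
  have hAper : ∀ i, b i +ᵥ A = A := fun i => vadd_set_eq_self_iff.2 (hper i)
  have hdisj := havoid.pairwise_disjoint_preimage_add hv
  rw [hφ0]
  simp only [hφ]
  refine le_of_tendsto_of_tendsto (tendsto_finsetSum _ fun i _ => tendsto_upperDensity_of_periodic
    hb fun j => vadd_inter_preimage_add_eq_self (hAper j) (v i))
    (tendsto_upperDensity_of_periodic hb hAper) ?_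
  filter_upwards [eventually_ge_atTop 0] with T hT
  rw [← Finset.sum_div]
  gcongr
  exact sum_measureReal_le_of_pairwise_disjoint
    (fun i => (hA.inter (measurable_add_const _ hA)).inter (measurableSet_cube n T))
    (fun i j hij => (hdisj hij).mono (inter_subset_left.trans inter_subset_right)
      (inter_subset_left.trans inter_subset_right))
    (fun i => inter_subset_inter_left _ inter_subset_left) (volume_inter_cube_ne_top A hT)

theorem simplex_inequality (n : ℕ) (hn : 1 ≤ n)
    (A : Set (EuclideanSpace ℝ (Fin n))) (hA : MeasurableSet A)
    (b : Fin n → EuclideanSpace ℝ (Fin n)) (hb : LinearIndependent ℝ b)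
    (hper : ∀ i, ∀ x : EuclideanSpace ℝ (Fin n), x ∈ A ↔ x + b i ∈ A)
    (havoid : AvoidsDistance A 1)
    (v : Fin (n + 1) → EuclideanSpace ℝ (Fin n))
    (hv : Pairwise fun i j => dist (v i) (v j) = 1)
    (φ : EuclideanSpace ℝ (Fin n) → ℝ)
    (hφ : ∀ y, φ y = upperDensity (A ∩ {x | x + y ∈ A})) :
    (∑ i, φ (v i)) ≤ φ 0 ∧ φ 0 = upperDensity A :=
  simplex_inequality_general n A hA b hb hper havoid v hv φ hφ
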